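/- Let λ_k = (1+|k|)^{−1} log^{−2β}(e+|k|), β > 1/2. There is an absolute constant C > 0 such that for every even n ≥ 2 and every continuous φ with support in [0, 1/(2n)] there exist n points z_1,…,z_n in {j/(2n) : j = 0,…,2n−1} such that φ^{(n)}(x) = ∑_{j=1}^n φ(x − z_j) satisfies (∫₀¹ φ^{(n)} dx)/‖φ^{(n)}‖_{H_λ} ≤ C n^{−1/2} (log n)^{−β}. -/

import Mathlib

open MeasureTheory
open scoped ENNReal

/-- The `k`-th Fourier coefficient of a 1-periodic function `f : ℝ → ℂ`. -/
noncomputable def fourierCoef1 (f : ℝ → ℂ) (k : ℤ) : ℂ :=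
  ∫ x in Set.Ioo (0 : ℝ) 1, f x * Complex.exp (-(2 * Real.pi * Complex.I) * (((k : ℝ) * x : ℝ) : ℂ))

/-- The squared `H_λ`-norm `∑_k |f̂(k)|²/λ_k` (as an extended real) for
`λ_k = (1+|k|)^{-1} log^{-2β}(e+|k|)`. -/
noncomputable def hlamNormSq (β : ℝ) (f : ℝ → ℂ) : ℝ≥0∞ :=
  ∑' k : ℤ, (‖fourierCoef1 f k‖₊ : ℝ≥0∞) ^ 2 /
    ENNReal.ofReal ((1 + |(k : ℝ)|)⁻¹ * Real.log (Real.exp 1 + |(k : ℝ)|) ^ (-(2 * β)))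

/-- The quantity `‖f‖₂² + ∫₀¹ ((1-log h)^{2β}/h²) ‖Δ_h f‖₂² dh` (as an extended real). -/
noncomputable def diffNormSq (β : ℝ) (f : ℝ → ℂ) : ℝ≥0∞ :=
  (∫⁻ x in Set.Ioo (0 : ℝ) 1, (‖f x‖₊ : ℝ≥0∞) ^ 2) +
    ∫⁻ h in Set.Ioo (0 : ℝ) 1, ENNReal.ofReal ((1 - Real.log h) ^ (2 * β) / h ^ 2) *
      ∫⁻ x in Set.Ioo (0 : ℝ) 1, (‖f (x + h) - f x‖₊ : ℝ≥0∞) ^ 2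

/-!
Take the `n` points `j / n`. The resulting `φ⁽ⁿ⁾` is `1/n`-periodic, so its Fourier
coefficients vanish for `0 < |k| < n`, while `1/λ_k ≥ n log^{2β} n` for `|k| ≥ n`. Since
`φ⁽ⁿ⁾` vanishes off a set of measure `1/2`, Cauchy–Schwarz gives `|∫ φ⁽ⁿ⁾|² ≤ ½ ‖φ⁽ⁿ⁾‖₂²`,
so by Parseval the nonzero frequencies carry at least `|∫ φ⁽ⁿ⁾|²`. Hence
`‖φ⁽ⁿ⁾‖²_{H_λ} ≥ n log^{2β} n · |∫ φ⁽ⁿ⁾|²`, and `C = 1` works.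
-/

open Complex Set Function Real

theorem sq_norm_integral_le_measureReal_univ_mul {α E : Type*} [MeasurableSpace α]
    [NormedAddCommGroup E] [NormedSpace ℝ E] [CompleteSpace E] {μ : Measure α} [IsFiniteMeasure μ]
    {f : α → E} (hf : MemLp f 2 μ) :
    ‖∫ x, f x ∂μ‖ ^ 2 ≤ μ.real univ * ∫ x, ‖f x‖ ^ 2 ∂μ := by
  rcases eq_zero_or_neZero μ with rfl | hμ
  · simp
  have hconv : ConvexOn ℝ univ (fun x : E => ‖x‖ ^ 2) :=
    (convexOn_norm convex_univ).pow (fun _ _ => norm_nonneg _) 2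
  have hjensen := hconv.map_average_le (continuous_norm.pow 2).continuousOn isClosed_univ
    (by simp) (hf.integrable one_le_two) (hf.integrable_norm_pow two_ne_zero)
  have hpos : 0 < μ.real univ := measureReal_univ_pos
  simp only [average_eq, norm_smul, mul_pow, smul_eq_mul, norm_inv, Real.norm_eq_abs,
    abs_of_pos hpos] at hjensen
  rw [inv_pow, ← div_eq_inv_mul, ← div_eq_inv_mul, div_le_div_iff₀ (by positivity) hpos] at hjensen
  nlinarith

theorem sq_norm_setIntegral_le_measureReal_mul {α E : Type*} [MeasurableSpace α]
    [NormedAddCommGroup E] [NormedSpace ℝ E] [CompleteSpace E] {μ : Measure α} {f : α → E}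
    {s t : Set α} (ht : MeasurableSet t) (hμs : μ s ≠ ∞)
    (hf : MemLp f 2 (μ.restrict t)) (hf0 : ∀ x ∈ t, x ∉ s → f x = 0) :
    ‖∫ x in t, f x ∂μ‖ ^ 2 ≤ μ.real s * ∫ x in t, ‖f x‖ ^ 2 ∂μ := by
  have hst : μ (s ∩ t) ≠ ∞ := ne_top_of_le_ne_top hμs (measure_mono inter_subset_left)
  have : IsFiniteMeasure (μ.restrict (s ∩ t)) := isFiniteMeasure_restrict.mpr hst
  have hf' : MemLp f 2 (μ.restrict (s ∩ t)) :=
    hf.mono_measure (Measure.restrict_mono inter_subset_right le_rfl)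
  rw [setIntegral_eq_of_subset_of_forall_sdiff_eq_zero ht inter_subset_right
    fun x hx => hf0 x hx.1 fun hxs => hx.2 ⟨hxs, hx.1⟩]
  calc ‖∫ x in s ∩ t, f x ∂μ‖ ^ 2
      ≤ μ.real (s ∩ t) * ∫ x in s ∩ t, ‖f x‖ ^ 2 ∂μ := by
        simpa [measureReal_restrict_apply_univ] using sq_norm_integral_le_measureReal_univ_mul hf'
    _ ≤ μ.real s * ∫ x in t, ‖f x‖ ^ 2 ∂μ := by
        refine mul_le_mul (measureReal_mono inter_subset_left hμs) ?_
          (integral_nonneg fun _ => by positivity) measureReal_nonneg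
        exact setIntegral_mono_set (hf.integrable_norm_pow two_ne_zero)
          (.of_forall fun _ => by positivity) (.of_forall inter_subset_right)

theorem volume_biUnion_Icc_le (n : ℕ) (c : ℕ → ℝ) (a : ℝ) :
    volume (⋃ j ∈ Finset.range n, Icc (c j) (c j + a)) ≤ ENNReal.ofReal (n * a) := by
  calc volume (⋃ j ∈ Finset.range n, Icc (c j) (c j + a))
      ≤ ∑ j ∈ Finset.range n, volume (Icc (c j) (c j + a)) := measure_biUnion_finset_le _ _
    _ = ENNReal.ofReal (n * a) := by
        simp [Real.volume_Icc, ENNReal.ofReal_mul (Nat.cast_nonneg n)]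

theorem ENNReal.le_ofReal_rpow_mul_rpow_of_ofReal_mul_sq_le {c : ℝ} (hc : 0 < c)
    {a S : ℝ≥0∞} (h : ENNReal.ofReal c * a ^ 2 ≤ S) :
    a ≤ ENNReal.ofReal (c ^ (-(1 / 2) : ℝ)) * S ^ ((1 : ℝ) / 2) := by
  have hc0 : ENNReal.ofReal c ≠ 0 := by simpa using hc
  calc a = ((ENNReal.ofReal c)⁻¹ * (ENNReal.ofReal c * a ^ 2)) ^ ((1 : ℝ) / 2) := by
        rw [← mul_assoc, ENNReal.inv_mul_cancel hc0 ENNReal.ofReal_ne_top, one_mul,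
          ← ENNReal.rpow_natCast, ← ENNReal.rpow_mul]
        norm_num
    _ ≤ ((ENNReal.ofReal c)⁻¹ * S) ^ ((1 : ℝ) / 2) := by gcongr
    _ = ENNReal.ofReal (c ^ (-(1 / 2) : ℝ)) * S ^ ((1 : ℝ) / 2) := by
        rw [ENNReal.mul_rpow_of_nonneg _ _ (by norm_num), ENNReal.inv_rpow,
          ← ENNReal.rpow_neg, ENNReal.ofReal_rpow_of_pos hc]

theorem fourierCoef1_eq_fourierCoeffOn (g : ℝ → ℂ) (k : ℤ) :
    fourierCoef1 g k = fourierCoeffOn zero_lt_one g k := by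
  rw [fourierCoeffOn_eq_integral, fourierCoef1, sub_zero, div_one, one_smul,
    intervalIntegral.integral_of_le zero_le_one, integral_Ioc_eq_integral_Ioo]
  refine setIntegral_congr_fun measurableSet_Ioo fun x _ => ?_
  rw [fourier_coe_apply, smul_eq_mul, mul_comm]
  congr 2
  push_cast
  ring

theorem hasSum_sq_norm_fourierCoef1 {g : ℝ → ℂ}
    (hg : MemLp g 2 (volume.restrict (Ioc 0 1))) :
    HasSum (fun k => ‖fourierCoef1 g k‖ ^ 2) (∫ x in Ioo 0 1, ‖g x‖ ^ 2) := by
  convert hasSum_sq_fourierCoeffOn zero_lt_one hg using 1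
  · simp only [fourierCoef1_eq_fourierCoeffOn]
  · rw [sub_zero, inv_one, one_smul, intervalIntegral.integral_of_le zero_le_one,
      integral_Ioc_eq_integral_Ioo]

theorem tsum_enorm_sq_fourierCoef1 {g : ℝ → ℂ} (hg : MemLp g 2 (volume.restrict (Ioc 0 1))) :
    ∑' k, ‖fourierCoef1 g k‖ₑ ^ 2 = ENNReal.ofReal (∫ x in Ioo 0 1, ‖g x‖ ^ 2) := by
  have h := hasSum_sq_norm_fourierCoef1 hg
  rw [← h.tsum_eq, ENNReal.ofReal_tsum_of_nonneg (fun _ => by positivity) h.summable]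
  simp [← ofReal_norm, ENNReal.ofReal_pow]

theorem fourierCoef1_zero (g : ℝ → ℂ) : fourierCoef1 g 0 = ∫ x in Ioo 0 1, g x := by
  simp [fourierCoef1]

theorem two_mul_enorm_sq_fourierCoef1_zero_le_tsum {g : ℝ → ℂ} {s : Set ℝ}
    (hg : MemLp g 2 (volume.restrict (Ioc 0 1))) (hs : volume s ≤ ENNReal.ofReal (1 / 2))
    (hg0 : ∀ x ∈ Ioo (0 : ℝ) 1, x ∉ s → g x = 0) :
    2 * ‖fourierCoef1 g 0‖ₑ ^ 2 ≤ ∑' k, ‖fourierCoef1 g k‖ₑ ^ 2 := by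
  have hvol : volume.real s ≤ 1 / 2 := ENNReal.toReal_le_of_le_ofReal (by norm_num) hs
  have hcs := sq_norm_setIntegral_le_measureReal_mul measurableSet_Ioo
    (ne_top_of_le_ne_top ENNReal.ofReal_ne_top hs)
    (hg.mono_measure (Measure.restrict_mono Ioo_subset_Ioc_self le_rfl)) hg0
  have hint : 0 ≤ ∫ x in Ioo (0 : ℝ) 1, ‖g x‖ ^ 2 := integral_nonneg fun _ => by positivity
  rw [tsum_enorm_sq_fourierCoef1 hg, fourierCoef1_zero, ← ofReal_norm, ← ENNReal.ofReal_pow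
    (norm_nonneg _), ← ENNReal.ofReal_ofNat 2, ← ENNReal.ofReal_mul zero_le_two]
  exact ENNReal.ofReal_le_ofReal (by nlinarith)

theorem fourierCoef1_eq_intervalIntegral (g : ℝ → ℂ) (k : ℤ) :
    fourierCoef1 g k = ∫ x in (0 : ℝ)..1, g x * cexp (-(2 * π * I) * (k * x)) := by
  rw [intervalIntegral.integral_of_le zero_le_one, integral_Ioc_eq_integral_Ioo]
  simp only [fourierCoef1, ofReal_mul, ofReal_intCast]

theorem fourierCoef1_comp_sub {g : ℝ → ℂ} (hg : Periodic g 1) (c : ℝ) (k : ℤ) :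
    fourierCoef1 (fun x => g (x - c)) k = cexp (-(2 * π * I) * (k * c)) * fourierCoef1 g k := by
  set e : ℝ → ℂ := fun x => cexp (-(2 * π * I) * (k * x))
  have he : ∀ x, e x = e c * e (x - c) := fun x => by
    simp only [e, ← Complex.exp_add]; congr 1; push_cast; ring
  have hper : Periodic (fun x => g x * e x) 1 := fun x => by
    simp only [hg x, e, ofReal_add, ofReal_one, mul_add, mul_one, Complex.exp_add]
    rw [show -(2 * π * I) * k = ((-k : ℤ) : ℂ) * (2 * π * I) by push_cast; ring,
      Complex.exp_int_mul_two_pi_mul_I, mul_one]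
  calc fourierCoef1 (fun x => g (x - c)) k
      = e c * ∫ x in (0 : ℝ)..1, g (x - c) * e (x - c) := by
        rw [fourierCoef1_eq_intervalIntegral, ← intervalIntegral.integral_const_mul]
        congr 1
        funext x
        change g (x - c) * e x = _
        rw [he x]
        ring
    _ = e c * fourierCoef1 g k := by
        rw [intervalIntegral.integral_comp_sub_right (fun x => g x * e x), zero_sub,
          ← neg_add_eq_sub, hper.intervalIntegral_add_eq (-c) 0, zero_add,
          fourierCoef1_eq_intervalIntegral]

theorem exp_neg_two_pi_I_mul_div_ne_one {n : ℕ} (hn : n ≠ 0) {k : ℤ} (hk : ¬ (n : ℤ) ∣ k) :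
    cexp (-(2 * π * I) * (k * ((1 / n : ℝ) : ℂ))) ≠ 1 := by
  have hζ := Complex.isPrimitiveRoot_exp n hn
  rw [show -(2 * π * I) * (k * ((1 / n : ℝ) : ℂ)) = ((-k : ℤ) : ℂ) * (2 * π * I / n) by
    push_cast; ring, Complex.exp_int_mul, Ne, hζ.zpow_eq_one_iff_dvd, dvd_neg]
  exact hk

theorem fourierCoef1_eq_zero_of_periodic {g : ℝ → ℂ} (hg : Periodic g 1) {n : ℕ} (hn : n ≠ 0)
    (hgn : Periodic g (1 / n)) {k : ℤ} (hk : ¬ (n : ℤ) ∣ k) : fourierCoef1 g k = 0 := by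
  have h := fourierCoef1_comp_sub hg (1 / n) k
  simp only [hgn.sub_eq] at h
  by_contra hne
  exact exp_neg_two_pi_I_mul_div_ne_one hn hk ((mul_eq_right₀ hne).mp h.symm)

/-- The paper's `φ⁽ⁿ⁾` for the points `z_j = j / n`, every other point of the grid `j / (2n)`. -/
noncomputable def equispacedSum {M : Type*} [AddCommMonoid M] (n : ℕ) (φ : ℝ → M) (x : ℝ) : M :=
  ∑ j ∈ Finset.range n, φ (x - j / n)

section equispacedSum

variable {M : Type*} [AddCommMonoid M] {n : ℕ} {φ : ℝ → M}

theorem equispacedSum_periodic_one (hφ : Periodic φ 1) : Periodic (equispacedSum n φ) 1 :=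
  fun x => Finset.sum_congr rfl fun j _ => by rw [add_sub_right_comm, hφ]

theorem equispacedSum_periodic (hφ : Periodic φ 1) (hn : n ≠ 0) :
    Periodic (equispacedSum n φ) (1 / n) := by
  intro x
  obtain ⟨m, rfl⟩ := Nat.exists_eq_succ_of_ne_zero hn
  have hlast : φ (x - m / (m + 1 : ℕ)) = φ (x + 1 / (m + 1 : ℕ)) := by
    rw [← hφ]; congr 1; push_cast; field_simp; ring
  simp only [equispacedSum]
  rw [Finset.sum_range_succ', Finset.sum_range_succ, hlast]
  congr 1
  · refine Finset.sum_congr rfl fun j _ => ?_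
    congr 1; push_cast; ring
  · simp

theorem continuous_equispacedSum [TopologicalSpace M] [ContinuousAdd M] (hφ : Continuous φ) :
    Continuous (equispacedSum n φ) :=
  continuous_finsetSum _ fun _ _ => hφ.comp (continuous_id.sub continuous_const)

theorem equispacedSum_eq_zero_of_notMem {a : ℝ} (ha : a ≤ 1 / n) (hφ : Periodic φ 1)
    (hφ0 : ∀ x ∈ Ico (0 : ℝ) 1, x ∉ Icc 0 a → φ x = 0) {x : ℝ} (hx : x ∈ Ioo (0 : ℝ) 1)
    (hxs : x ∉ ⋃ j ∈ Finset.range n, Icc ((j : ℝ) / n) (j / n + a)) :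
    equispacedSum n φ x = 0 := by
  refine Finset.sum_eq_zero fun j hj => ?_
  have hn : (0 : ℝ) < n := by exact_mod_cast Nat.zero_lt_of_lt (Finset.mem_range.mp hj)
  have hjn : (j : ℝ) / n + 1 / n ≤ 1 := by
    rw [← add_div, div_le_one hn]; exact_mod_cast Finset.mem_range.mp hj
  have hj0 : (0 : ℝ) ≤ j / n := by positivity
  have hn0 : (0 : ℝ) < 1 / n := by positivity
  rcases lt_or_ge (x - j / n) 0 with hneg | hnonneg
  · rw [← hφ]
    refine hφ0 _ ⟨by linarith [hx.1], by linarith⟩ fun hmem => ?_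
    linarith [hmem.2, hx.1]
  · refine hφ0 _ ⟨hnonneg, by linarith [hx.2]⟩ fun hmem => hxs ?_
    exact mem_biUnion hj ⟨by linarith, by linarith [hmem.2]⟩

end equispacedSum

noncomputable def hlamWeight (β : ℝ) (k : ℤ) : ℝ :=
  (1 + |(k : ℝ)|)⁻¹ * Real.log (Real.exp 1 + |(k : ℝ)|) ^ (-(2 * β))

theorem hlamWeight_pos (β : ℝ) (k : ℤ) : 0 < hlamWeight β k := by
  have hlog : 0 < Real.log (Real.exp 1 + |(k : ℝ)|) :=
    Real.log_pos (by linarith [Real.add_one_le_exp 1, abs_nonneg (k : ℝ)])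
  unfold hlamWeight
  positivity

theorem natCast_mul_log_rpow_le_inv_hlamWeight {β : ℝ} (hβ : 0 ≤ β) {n : ℕ} (hn : 0 < n)
    {k : ℤ} (hk : n ≤ |k|) : n * Real.log n ^ (2 * β) ≤ (hlamWeight β k)⁻¹ := by
  have hk' : (n : ℝ) ≤ |(k : ℝ)| := by exact_mod_cast hk
  have he : 1 ≤ Real.exp 1 := by linarith [Real.add_one_le_exp 1]
  rw [hlamWeight, mul_inv, inv_inv, ← Real.rpow_neg (Real.log_nonneg (by linarith)), neg_neg]
  have hn' : (0 : ℝ) < n := by exact_mod_cast hn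
  gcongr <;> linarith

theorem ofReal_mul_enorm_sq_fourierCoef1_zero_le_hlamNormSq {β : ℝ} (hβ : 0 ≤ β) {n : ℕ}
    (hn : 0 < n) {f : ℝ → ℂ} (hgap : ∀ k : ℤ, k ≠ 0 → |k| < n → fourierCoef1 f k = 0)
    (hhalf : 2 * ‖fourierCoef1 f 0‖ₑ ^ 2 ≤ ∑' k, ‖fourierCoef1 f k‖ₑ ^ 2) :
    ENNReal.ofReal (n * Real.log n ^ (2 * β)) * ‖fourierCoef1 f 0‖ₑ ^ 2 ≤ hlamNormSq β f := by
  rw [ENNReal.summable.tsum_eq_add_tsum_ite' 0, two_mul] at hhalf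
  set T := ∑' k : ℤ, if k = 0 then 0 else ‖fourierCoef1 f k‖ₑ ^ 2
  have hT : ‖fourierCoef1 f 0‖ₑ ^ 2 ≤ T :=
    (ENNReal.add_le_add_iff_left (ENNReal.pow_ne_top enorm_ne_top)).mp hhalf
  have hterm : ∀ k : ℤ, ENNReal.ofReal (n * Real.log n ^ (2 * β)) *
      (if k = 0 then 0 else ‖fourierCoef1 f k‖ₑ ^ 2) ≤
      ‖fourierCoef1 f k‖ₑ ^ 2 / ENNReal.ofReal (hlamWeight β k) := by
    intro k
    split_ifs with hk0
    · simp
    rcases lt_or_ge |k| n with hkn | hkn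
    · simp [hgap k hk0 hkn]
    rw [div_eq_mul_inv, ← ENNReal.ofReal_inv_of_pos (hlamWeight_pos β k), mul_comm]
    gcongr
    exact natCast_mul_log_rpow_le_inv_hlamWeight hβ hn hkn
  calc ENNReal.ofReal (n * Real.log n ^ (2 * β)) * ‖fourierCoef1 f 0‖ₑ ^ 2
      ≤ ENNReal.ofReal (n * Real.log n ^ (2 * β)) * T := by gcongr
    _ ≤ hlamNormSq β f := by
        rw [← ENNReal.tsum_mul_left]
        simpa only [hlamNormSq, hlamWeight, enorm_eq_nnnorm] using ENNReal.tsum_le_tsum hterm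

theorem bump_technique_fails (β : ℝ) (hβ : 1 / 2 < β) :
    ∃ C : ℝ, 0 < C ∧ ∀ n : ℕ, 2 ≤ n → Even n → ∀ φ : ℝ → ℂ, Continuous φ →
      Function.Periodic φ 1 →
      (∀ x ∈ Set.Ico (0 : ℝ) 1, x ∉ Set.Icc (0 : ℝ) (1 / (2 * n)) → φ x = 0) →
      ∃ z : Fin n → ℝ, Function.Injective z ∧
        (∀ j, ∃ m : ℕ, m < 2 * n ∧ z j = (m : ℝ) / (2 * n)) ∧
        ENNReal.ofReal ‖∫ x in Set.Ioo (0 : ℝ) 1, ∑ j, φ (x - z j)‖ ≤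
          ENNReal.ofReal (C * (n : ℝ) ^ (-(1 / 2) : ℝ) * Real.log n ^ (-β)) *
            (hlamNormSq β (fun x => ∑ j, φ (x - z j))) ^ ((1 : ℝ) / 2) := by
  refine ⟨1, one_pos, fun n hn _ φ hφ hper hsupp => ?_⟩
  have hn0 : (0 : ℝ) < n := by positivity
  have hlog : 0 < Real.log n := Real.log_pos (by exact_mod_cast hn)
  refine ⟨fun j => (j : ℕ) / n, fun i j hij => ?_, fun j => ⟨2 * j, by omega, ?_⟩, ?_⟩
  · exact Fin.ext (by exact_mod_cast (div_left_inj' hn0.ne').mp hij)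
  · push_cast
    rw [mul_div_mul_left _ _ two_ne_zero]
  have hsum : (fun x => ∑ j : Fin n, φ (x - (j : ℕ) / n)) = equispacedSum n φ :=
    funext fun x => Fin.sum_univ_eq_sum_range (fun j => φ (x - j / n)) n
  set f := equispacedSum n φ
  have hcont : Continuous f := continuous_equispacedSum hφ
  have hL2 : MemLp f 2 (volume.restrict (Ioc 0 1)) :=
    (memLp_two_iff_integrable_sq_norm hcont.aestronglyMeasurable).mpr
      (hcont.norm.pow 2).integrableOn_Ioc
  have hgap : ∀ k : ℤ, k ≠ 0 → |k| < n → fourierCoef1 f k = 0 := fun k hk hkn =>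
    fourierCoef1_eq_zero_of_periodic (equispacedSum_periodic_one hper) (by omega)
      (equispacedSum_periodic hper (by omega)) fun hdvd => hk (Int.eq_zero_of_abs_lt_dvd hdvd hkn)
  have hvol := (volume_biUnion_Icc_le n (fun j => j / n) (1 / (2 * n))).trans_eq
    (congrArg ENNReal.ofReal (by field_simp : (n : ℝ) * (1 / (2 * n)) = 1 / 2))
  have hhalf := two_mul_enorm_sq_fourierCoef1_zero_le_tsum hL2 hvol fun x hx hxs =>
    equispacedSum_eq_zero_of_notMem (one_div_le_one_div_of_le hn0 (by linarith)) hper hsupp hx hxs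
  have hbound := ofReal_mul_enorm_sq_fourierCoef1_zero_le_hlamNormSq (show 0 ≤ β by linarith)
    (by omega) hgap hhalf
  rw [hsum, ← fourierCoef1_zero, ofReal_norm]
  convert ENNReal.le_ofReal_rpow_mul_rpow_of_ofReal_mul_sq_le (by positivity) hbound using 3
  rw [one_mul, Real.mul_rpow hn0.le (by positivity), ← Real.rpow_mul hlog.le]
  ring_nf
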